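/- arXiv:2004.06788 — 2 statements merged into one kernel-verified Lean document; each statement's English description precedes it below -/
import Mathlib

section
/- Let G be a cubic edge-colorful graph with n vertices and let X = L(G). Then the following statements are equivalent: (i) G is edge-reflexive; (ii) B(X) has exactly n distinct 3-colorings; (iii) for every 3-coloring {A, B, C} of B(X) there is a vertex of G with incident edges e, f, g such that {A, B, C} = {φ_X(e), φ_X(f), φ_X(g)}. -/
open SimpleGraph

/-- A `k`-coloring of a graph `X`: a partition of the vertex set into `k`
(possibly empty) independent sets, the color classes of the coloring. -/
def IsColoring {V : Type*} (k : ℕ) (X : SimpleGraph V) (c : Fin k → Set V) : Prop :=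
  (∀ v : V, ∃! i : Fin k, v ∈ c i) ∧
  ∀ i : Fin k, ∀ u ∈ c i, ∀ w ∈ c i, ¬ X.Adj u w

/-- `S` occurs as a color class in some `k`-coloring of `X`. -/
def IsColorClass {V : Type*} (k : ℕ) (X : SimpleGraph V) (S : Set V) : Prop :=
  ∃ c : Fin k → Set V, IsColoring k X c ∧ ∃ i, c i = S

/-- The `k`-coloring complex `B(X)`: vertices are the color classes of
`k`-colorings of `X`, two of them adjacent if they occur together in some
`k`-coloring of `X`. -/
def ColoringComplex {V : Type*} (k : ℕ) (X : SimpleGraph V) :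
    SimpleGraph {S : Set V // IsColorClass k X S} where
  Adj C D := C ≠ D ∧ ∃ c : Fin k → Set V,
    IsColoring k X c ∧ (∃ i, c i = C.1) ∧ (∃ j, c j = D.1)
  symm := ⟨by
    rintro C D ⟨hne, c, hc, hi, hj⟩
    exact ⟨hne.symm, c, hc, hj, hi⟩⟩
  loopless := ⟨by rintro C ⟨hne, -⟩; exact hne rfl⟩

/-- The canonical map `φ_X`, sending a vertex `v` to the set of all color
classes containing `v`. -/
def phi {V : Type*} (k : ℕ) (X : SimpleGraph V) (v : V) :
    Set {S : Set V // IsColorClass k X S} :=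
  {C | v ∈ C.1}

/-- `X` is reflexive for `k`-colorings: the canonical map `φ_X` is a graph
isomorphism from `X` onto `B²(X) = B(B(X))`. -/
def IsReflexive {V : Type*} (k : ℕ) (X : SimpleGraph V) : Prop :=
  ∃ f : X ≃g ColoringComplex k (ColoringComplex k X),
    ∀ v : V, (f v : {T // IsColorClass k (ColoringComplex k X) T}).1 = phi k X v

/-- `X` is colorful for `k`-colorings: any two distinct vertices lie in
different color classes of some `k`-coloring of `X`. -/
def Colorful {V : Type*} (k : ℕ) (X : SimpleGraph V) : Prop :=
  ∀ x y : V, x ≠ y → ∃ c : Fin k → Set V, IsColoring k X c ∧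
    ∃ i j : Fin k, i ≠ j ∧ x ∈ c i ∧ y ∈ c j

/-- A cubic graph, possibly with half-edges (edges incident with a single
vertex, recorded as edges whose set of ends is a singleton), without parallel
edges: every vertex is incident with exactly three edges. -/
structure CubicGraph (V E : Type*) [DecidableEq V] where
  ends : E → Finset V
  ends_card : ∀ e, (ends e).card = 1 ∨ (ends e).card = 2
  no_parallel : ∀ e f, (ends e).card = 2 → ends e = ends f → e = f
  cubic : ∀ v : V, ∃ a b c : E, a ≠ b ∧ a ≠ c ∧ b ≠ c ∧
    ∀ f : E, v ∈ ends f ↔ f = a ∨ f = b ∨ f = c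

/-- The line graph of a cubic graph: its vertices are the edges of `G`
(including half-edges), two of them adjacent when they share an endpoint. -/
def lineGraph {V E : Type*} [DecidableEq V] (G : CubicGraph V E) : SimpleGraph E where
  Adj e f := e ≠ f ∧ (G.ends e ∩ G.ends f).Nonempty
  symm := ⟨by rintro e f ⟨hne, hint⟩; exact ⟨hne.symm, by rwa [Finset.inter_comm]⟩⟩
  loopless := ⟨by rintro e ⟨hne, -⟩; exact hne rfl⟩

/-- A cubic graph is edge-reflexive if its line graph is reflexive for
3-colorings. -/
def EdgeReflexive {V E : Type*} [DecidableEq V] (G : CubicGraph V E) : Prop :=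
  IsReflexive 3 (lineGraph G)

/-- A cubic graph is edge-colorful if its line graph is colorful for
3-colorings. -/
def EdgeColorful {V E : Type*} [DecidableEq V] (G : CubicGraph V E) : Prop :=
  Colorful 3 (lineGraph G)

/-- The underlying simple graph of a cubic graph: two vertices are adjacent
when some (full) edge joins them. -/
def underlying {V E : Type*} [DecidableEq V] (G : CubicGraph V E) : SimpleGraph V where
  Adj u w := u ≠ w ∧ ∃ e, G.ends e = {u, w}
  symm := ⟨by rintro u w ⟨hne, e, he⟩; exact ⟨hne.symm, e, by rwa [Finset.pair_comm]⟩⟩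
  loopless := ⟨by rintro u ⟨hne, -⟩; exact hne rfl⟩

/-- The number of 3-colorings of a graph `Y`, where a 3-coloring is identified
with its (unordered) set of color classes. -/
noncomputable def numColorings {W : Type*} (Y : SimpleGraph W) : ℕ :=
  Nat.card {P : Set (Set W) // ∃ c : Fin 3 → Set W, IsColoring 3 Y c ∧ P = Set.range c}

/-!
The three edges at a vertex `v` of `G` form a triangle of `X = L(G)`, so every color class of
`X` contains exactly one of them; hence `φ_X` of these three edges is a 3-coloring of `B(X)`, the
star coloring at `v`. Edge-colorfulness makes `φ_X` injective and, with the absence of parallel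
edges, makes distinct vertices give distinct star colorings. So `B(X)` has at least `n`
3-colorings, with equality exactly when every 3-coloring is a star coloring, which is (iii).
Under (iii) every color class of `B(X)` is some `φ_X(e)` and two of them are adjacent in `B²(X)`
exactly when the edges share a vertex, so `φ_X` is an isomorphism. Conversely, if `φ_X` is an
isomorphism, the classes of a 3-coloring of `B(X)` are the images of a triangle of `X`, i.e. of
three pairwise incident edges of `G`; these cannot form a triangle of `G`, since the third edge at
one of its corners would be forced into the color class of the opposite side in every 3-coloring
of `X`, against edge-colorfulness. So they share a vertex and the coloring is a star coloring.
-/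

open Function

namespace IsColoring

variable {V : Type*} {k : ℕ} {X : SimpleGraph V} {c : Fin k → Set V}

lemma eq_of_mem (hc : IsColoring k X c) {v : V} {i j : Fin k} (hi : v ∈ c i) (hj : v ∈ c j) :
    i = j :=
  (hc.1 v).unique hi hj

lemma ne_of_adj (hc : IsColoring k X c) {u w : V} {i j : Fin k} (hu : u ∈ c i) (hw : w ∈ c j)
    (huw : X.Adj u w) : i ≠ j := by
  rintro rfl
  exact hc.2 i u hu w hw huw

lemma isColorClass (hc : IsColoring k X c) (i : Fin k) : IsColorClass k X (c i) :=
  ⟨c, hc, i, rfl⟩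

lemma injective (hc : IsColoring k X c) (hne : ∀ i, (c i).Nonempty) : Injective c := by
  intro i j hij
  obtain ⟨v, hv⟩ := hne i
  exact hc.eq_of_mem hv (hij ▸ hv)

lemma existsUnique_mem_of_clique (hc : IsColoring k X c) {t : Fin k → V}
    (ht : Pairwise (X.Adj on t)) (i : Fin k) : ∃! j, t j ∈ c i := by
  choose color hcolor using fun v => (hc.1 v).exists
  have hinj : Injective (color ∘ t) := fun j j' h => by
    by_contra hne
    exact hc.ne_of_adj (hcolor (t j)) (hcolor (t j')) (ht hne) h
  obtain ⟨j, hj⟩ := Finite.injective_iff_surjective.1 hinj i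
  have hmem : t j ∈ c i := hj ▸ hcolor (t j)
  refine ⟨j, hmem, fun j' hj' => ?_⟩
  by_contra hne
  exact hc.2 i _ hj' _ hmem (ht hne)

lemma phi_nonempty (hc : IsColoring k X c) (v : V) : (phi k X v).Nonempty := by
  obtain ⟨i, hi, -⟩ := hc.1 v
  exact ⟨⟨c i, hc.isColorClass i⟩, hi⟩

end IsColoring

lemma Colorful.phi_injective {V : Type*} {k : ℕ} {X : SimpleGraph V} (hX : Colorful k X) :
    Injective (phi k X) := by
  intro x y hxy
  by_contra hne
  obtain ⟨c, hc, i, j, hij, hx, hy⟩ := hX x y hne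
  have hmem : (⟨c i, hc.isColorClass i⟩ : {S // IsColorClass k X S}) ∈ phi k X y := by
    rw [← hxy]
    exact hx
  exact hij (hc.eq_of_mem hmem hy)

namespace ColoringComplex

variable {V : Type*} {k : ℕ} {X : SimpleGraph V}

lemma not_adj_of_mem {C D : {S : Set V // IsColorClass k X S}} {v : V} (hC : v ∈ C.1)
    (hD : v ∈ D.1) : ¬ (ColoringComplex k X).Adj C D := by
  rintro ⟨hne, c, hc, ⟨i, hi⟩, ⟨j, hj⟩⟩
  have hij : i = j := hc.eq_of_mem (hi ▸ hC) (hj ▸ hD)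
  exact hne (Subtype.ext (by rw [← hi, ← hj, hij]))

lemma adj_of_isColoring {c : Fin k → Set V} (hc : IsColoring k X c) {i j : Fin k}
    (hij : c i ≠ c j) :
    (ColoringComplex k X).Adj ⟨c i, hc.isColorClass i⟩ ⟨c j, hc.isColorClass j⟩ :=
  ⟨fun h => hij (congrArg Subtype.val h), c, hc, ⟨i, rfl⟩, ⟨j, rfl⟩⟩

lemma isColoring_phi_comp_of_clique {t : Fin k → V} (ht : Pairwise (X.Adj on t)) :
    IsColoring k (ColoringComplex k X) (phi k X ∘ t) := by
  refine ⟨?_, fun j C hC D hD => not_adj_of_mem hC hD⟩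
  rintro ⟨S, c, hc, i, rfl⟩
  exact hc.existsUnique_mem_of_clique ht i

end ColoringComplex

lemma lineGraph_adj_iff {V E : Type*} [DecidableEq V] (G : CubicGraph V E) {e f : E} :
    (lineGraph G).Adj e f ↔ e ≠ f ∧ ∃ v, v ∈ G.ends e ∧ v ∈ G.ends f := by
  simp only [_root_.lineGraph, Finset.Nonempty, Finset.mem_inter]

namespace CubicGraph

variable {V E : Type*} [DecidableEq V] (G : CubicGraph V E)

def incident (v : V) : Set E := {e | v ∈ G.ends e}

lemma ncard_incident (v : V) : (G.incident v).ncard = 3 := by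
  obtain ⟨a, b, d, hab, had, hbd, hm⟩ := G.cubic v
  exact Set.ncard_eq_three.2 ⟨a, b, d, hab, had, hbd, Set.ext hm⟩

lemma finite_incident (v : V) : (G.incident v).Finite :=
  Set.finite_of_ncard_ne_zero (by rw [ncard_incident]; norm_num)

lemma eq_incident_of_subset {v : V} {s : Set E} (hs : s ⊆ G.incident v) (h3 : s.ncard = 3) :
    s = G.incident v :=
  Set.eq_of_subset_of_ncard_le hs (by rw [ncard_incident, h3]) (G.finite_incident v)

lemma exists_mem_ends (e : E) : ∃ v, v ∈ G.ends e := by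
  apply Finset.card_pos.1
  rcases G.ends_card e with h | h <;> omega

lemma ends_eq_pair {e : E} {v w : V} (hvw : v ≠ w) (hv : v ∈ G.ends e) (hw : w ∈ G.ends e) :
    G.ends e = {v, w} := by
  have hsub : {v, w} ⊆ G.ends e := Finset.insert_subset hv (Finset.singleton_subset_iff.2 hw)
  have hcard : ({v, w} : Finset V).card = 2 := Finset.card_pair hvw
  rcases G.ends_card e with h | h
  · exact absurd (Finset.card_le_card hsub) (by omega)
  · exact (Finset.eq_of_subset_of_card_le hsub (by omega)).symm

lemma incident_injective : Injective G.incident := by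
  intro v w hvw
  by_contra hne
  obtain ⟨a, b, _, hab, -, -, hv⟩ := Set.ncard_eq_three.1 (G.ncard_incident v)
  have hpair : ∀ e ∈ G.incident v, G.ends e = {v, w} := fun e he =>
    G.ends_eq_pair hne he (show e ∈ G.incident w from hvw ▸ he)
  have ha : G.ends a = {v, w} := hpair a (by simp [hv])
  have hb : G.ends b = {v, w} := hpair b (by simp [hv])
  exact hab (G.no_parallel a b (by rw [ha, Finset.card_pair hne]) (ha.trans hb.symm))

lemma exists_clique_range_eq_incident (v : V) :
    ∃ t : Fin 3 → E, Pairwise ((lineGraph G).Adj on t) ∧ Set.range t = G.incident v := by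
  have := (G.finite_incident v).to_subtype
  let σ := (Finite.equivFinOfCardEq (G.ncard_incident v)).symm
  refine ⟨Subtype.val ∘ σ, fun i j hij => ?_, ?_⟩
  · exact (lineGraph_adj_iff G).2
      ⟨Subtype.val_injective.ne (σ.injective.ne hij), v, (σ i).2, (σ j).2⟩
  · rw [σ.surjective.range_comp, Subtype.range_coe]

lemma exists_common_end (hcol : EdgeColorful G) {t : Fin 3 → E}
    (ht : Pairwise ((lineGraph G).Adj on t)) : ∃ v, ∀ i, v ∈ G.ends (t i) := by
  obtain ⟨ht01, v, hv0, hv1⟩ := (lineGraph_adj_iff G).1 (ht (show (0 : Fin 3) ≠ 1 by decide))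
  refine ⟨v, ?_⟩
  suffices hv2 : v ∈ G.ends (t 2) by
    intro i
    fin_cases i <;> assumption
  -- otherwise the third edge `h` at `v` is adjacent to `t 0` and `t 1`, so every 3-coloring of
  -- `L(G)` puts it in the class of `t 2`
  by_contra hv2
  obtain ⟨h, hv, hh01⟩ := Set.exists_mem_notMem_of_ncard_lt_ncard
    (s := {t 0, t 1}) (t := G.incident v) (by rw [Set.ncard_pair ht01, ncard_incident]; norm_num)
  have hadj : ∀ l : Fin 3, l ≠ 2 → (lineGraph G).Adj h (t l) := by
    intro l hl
    refine (lineGraph_adj_iff G).2 ⟨fun hl' => hh01 ?_, v, hv, ?_⟩ <;> fin_cases l <;> simp_all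
  obtain ⟨c, hc, i, j, hij, hhi, hj⟩ := hcol h (t 2) (by rintro rfl; exact hv2 hv)
  obtain ⟨l, hl, -⟩ := hc.existsUnique_mem_of_clique ht i
  have hl2 : l = 2 := by
    by_contra hl2
    exact hc.ne_of_adj hhi hl (hadj l hl2) rfl
  exact hij (hc.eq_of_mem (hl2 ▸ hl) hj)

lemma eq_image_incident_iff {α : Type*} (φ : E → α) (S : Set α) (v : V) :
    S = φ '' G.incident v ↔ ∃ e f g, e ≠ f ∧ e ≠ g ∧ f ≠ g ∧
      v ∈ G.ends e ∧ v ∈ G.ends f ∧ v ∈ G.ends g ∧ S = {φ e, φ f, φ g} := by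
  constructor
  · rintro rfl
    obtain ⟨e, f, g, hef, heg, hfg, hv⟩ := Set.ncard_eq_three.1 (G.ncard_incident v)
    have hmem (x : E) (hx : x ∈ ({e, f, g} : Set E)) : v ∈ G.ends x :=
      show x ∈ G.incident v from hv ▸ hx
    refine ⟨e, f, g, hef, heg, hfg, hmem e (by simp), hmem f (by simp), hmem g (by simp), ?_⟩
    rw [hv]
    simp [Set.image_insert_eq]
  · rintro ⟨e, f, g, hef, heg, hfg, he, hf, hg, rfl⟩
    have hsub : {e, f, g} ⊆ G.incident v := by
      simp only [Set.insert_subset_iff, Set.singleton_subset_iff]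
      exact ⟨he, hf, hg⟩
    rw [← G.eq_incident_of_subset hsub (Set.ncard_eq_three.2 ⟨e, f, g, hef, heg, hfg, rfl⟩)]
    simp [Set.image_insert_eq]

abbrev starClasses (v : V) : Set (Set {S : Set E // IsColorClass 3 (lineGraph G) S}) :=
  phi 3 (lineGraph G) '' G.incident v

def EveryColoringIsStar : Prop :=
  ∀ c, IsColoring 3 (ColoringComplex 3 (lineGraph G)) c → ∃ v, Set.range c = G.starClasses v

lemma exists_isColoring_range_eq_starClasses (v : V) :
    ∃ c, IsColoring 3 (ColoringComplex 3 (lineGraph G)) c ∧ Set.range c = G.starClasses v := by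
  obtain ⟨t, ht, hrange⟩ := G.exists_clique_range_eq_incident v
  exact ⟨_, ColoringComplex.isColoring_phi_comp_of_clique ht, by rw [Set.range_comp, hrange]⟩

lemma isColorClass_phi (e : E) :
    IsColorClass 3 (ColoringComplex 3 (lineGraph G)) (phi 3 (lineGraph G) e) := by
  obtain ⟨v, hv⟩ := G.exists_mem_ends e
  obtain ⟨c, hc, hrange⟩ := G.exists_isColoring_range_eq_starClasses v
  obtain ⟨i, hi⟩ : phi 3 (lineGraph G) e ∈ Set.range c := hrange ▸ Set.mem_image_of_mem _ hv
  exact ⟨c, hc, i, hi⟩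

lemma phi_nonempty (hcol : EdgeColorful G) (e : E) : (phi 3 (lineGraph G) e).Nonempty := by
  obtain ⟨v, -⟩ := G.exists_mem_ends e
  obtain ⟨a, b, -, hab, -, -, -⟩ := Set.ncard_eq_three.1 (G.ncard_incident v)
  obtain ⟨c, hc, -⟩ := hcol a b hab
  exact hc.phi_nonempty e

lemma numColorings_eq_card_iff [Finite E] (hcol : EdgeColorful G) :
    numColorings (ColoringComplex 3 (lineGraph G)) = Nat.card V ↔ G.EveryColoringIsStar := by
  let star (v : V) : {P // ∃ c, IsColoring 3 (ColoringComplex 3 (lineGraph G)) c ∧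
      P = Set.range c} :=
    ⟨G.starClasses v, (G.exists_isColoring_range_eq_starClasses v).imp fun _ h => ⟨h.1, h.2.symm⟩⟩
  have hinj : Injective star := fun v w h =>
    G.incident_injective (Set.image_injective.2 hcol.phi_injective (congrArg Subtype.val h))
  calc numColorings (ColoringComplex 3 (lineGraph G)) = Nat.card V ↔ Bijective star := by
        rw [Nat.bijective_iff_injective_and_card, and_iff_right hinj, numColorings, eq_comm]
    _ ↔ Surjective star := and_iff_right hinj
    _ ↔ G.EveryColoringIsStar := by
        constructor
        · intro hsurj c hc
          obtain ⟨v, hv⟩ := hsurj ⟨Set.range c, c, hc, rfl⟩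
          exact ⟨v, (congrArg Subtype.val hv).symm⟩
        · rintro hstar ⟨P, c, hc, rfl⟩
          obtain ⟨v, hv⟩ := hstar c hc
          exact ⟨v, Subtype.ext hv.symm⟩

lemma edgeReflexive_of_everyColoringIsStar (hcol : EdgeColorful G)
    (hstar : G.EveryColoringIsStar) : EdgeReflexive G := by
  let ψ (e : E) : {T // IsColorClass 3 (ColoringComplex 3 (lineGraph G)) T} :=
    ⟨phi 3 (lineGraph G) e, G.isColorClass_phi e⟩
  have hψ : Injective ψ := fun e f h => hcol.phi_injective (congrArg Subtype.val h)
  have hsurj : Surjective ψ := by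
    rintro ⟨T, c, hc, i, rfl⟩
    obtain ⟨v, hv⟩ := hstar c hc
    obtain ⟨e, -, he⟩ : c i ∈ G.starClasses v := hv ▸ Set.mem_range_self i
    exact ⟨e, Subtype.ext he⟩
  have hadj (e f : E) :
      (ColoringComplex 3 (ColoringComplex 3 (lineGraph G))).Adj (ψ e) (ψ f) ↔
        (lineGraph G).Adj e f := by
    rw [lineGraph_adj_iff]
    constructor
    · rintro ⟨hne, c, hc, he, hf⟩
      obtain ⟨v, hv⟩ := hstar c hc
      have hmem (x : E) (hx : phi 3 (lineGraph G) x ∈ Set.range c) : v ∈ G.ends x :=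
        hcol.phi_injective.mem_set_image.1 (hv ▸ hx)
      exact ⟨fun h => hne (congrArg ψ h), v, hmem e he, hmem f hf⟩
    · rintro ⟨hne, v, he, hf⟩
      obtain ⟨c, hc, hv⟩ := G.exists_isColoring_range_eq_starClasses v
      have hmem (x : E) (hx : v ∈ G.ends x) : phi 3 (lineGraph G) x ∈ Set.range c :=
        hv ▸ Set.mem_image_of_mem _ hx
      exact ⟨hψ.ne hne, c, hc, hmem e he, hmem f hf⟩
  exact ⟨⟨Equiv.ofBijective ψ ⟨hψ, hsurj⟩, hadj _ _⟩, fun _ => rfl⟩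

lemma everyColoringIsStar_of_edgeReflexive (hcol : EdgeColorful G) (hrefl : EdgeReflexive G) :
    G.EveryColoringIsStar := by
  obtain ⟨F, hF⟩ := hrefl
  intro c hc
  let t (i : Fin 3) : E := F.symm ⟨c i, hc.isColorClass i⟩
  have hct : c = phi 3 (lineGraph G) ∘ t := funext fun i => by
    simp only [comp_apply, ← hF, t, RelIso.apply_symm_apply]
  have hc_inj : Injective c := hc.injective fun i => hct ▸ G.phi_nonempty hcol (t i)
  have ht : Pairwise ((lineGraph G).Adj on t) := fun i j hij =>
    F.symm.map_adj_iff.2 (ColoringComplex.adj_of_isColoring hc (hc_inj.ne hij))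
  obtain ⟨v, hv⟩ := G.exists_common_end hcol ht
  have hrange : Set.range t = G.incident v :=
    G.eq_incident_of_subset (Set.range_subset_iff.2 hv)
      (by rw [Set.ncard_range_of_injective (fun i j h => by_contra fun hij => (ht hij).ne h),
        Nat.card_eq_fintype_card, Fintype.card_fin])
  exact ⟨v, by rw [hct, Set.range_comp, hrange]⟩

end CubicGraph

/-- For a cubic edge-colorful graph `G` of order `n` with `X = L(G)`, the
following are equivalent: (i) `G` is edge-reflexive; (ii) `B(X)` has exactly
`n` 3-colorings; (iii) every 3-coloring of `B(X)` has the form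
`{φ_X(e), φ_X(f), φ_X(g)}` for the three edges `e`, `f`, `g` incident with
some vertex of `G`. -/
theorem edgeReflexive_iff_count {V E : Type*} [DecidableEq V] [Fintype V] [Fintype E]
    (G : CubicGraph V E) (n : ℕ) (hn : Fintype.card V = n)
    (hcolorful : EdgeColorful G) :
    (EdgeReflexive G ↔ numColorings (ColoringComplex 3 (lineGraph G)) = n) ∧
    (numColorings (ColoringComplex 3 (lineGraph G)) = n ↔
      ∀ c : Fin 3 → Set {S : Set E // IsColorClass 3 (lineGraph G) S},
        IsColoring 3 (ColoringComplex 3 (lineGraph G)) c →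
        ∃ (v : V) (e f g : E), e ≠ f ∧ e ≠ g ∧ f ≠ g ∧
          v ∈ G.ends e ∧ v ∈ G.ends f ∧ v ∈ G.ends g ∧
          Set.range c =
            {phi 3 (lineGraph G) e, phi 3 (lineGraph G) f, phi 3 (lineGraph G) g}) := by
  have hstar : G.EveryColoringIsStar ↔
      ∀ c : Fin 3 → Set {S : Set E // IsColorClass 3 (lineGraph G) S},
        IsColoring 3 (ColoringComplex 3 (lineGraph G)) c →
        ∃ (v : V) (e f g : E), e ≠ f ∧ e ≠ g ∧ f ≠ g ∧
          v ∈ G.ends e ∧ v ∈ G.ends f ∧ v ∈ G.ends g ∧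
          Set.range c = {phi 3 (lineGraph G) e, phi 3 (lineGraph G) f, phi 3 (lineGraph G) g} :=
    forall₂_congr fun c _ => exists_congr fun v => G.eq_image_incident_iff _ _ v
  have hcount : numColorings (ColoringComplex 3 (lineGraph G)) = n ↔ G.EveryColoringIsStar := by
    rw [← hn, ← Nat.card_eq_fintype_card]
    exact G.numColorings_eq_card_iff hcolorful
  have hrefl : EdgeReflexive G ↔ G.EveryColoringIsStar :=
    ⟨G.everyColoringIsStar_of_edgeReflexive hcolorful,
      G.edgeReflexive_of_everyColoringIsStar hcolorful⟩
  exact ⟨hrefl.trans hcount.symm, hcount.trans hstar⟩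
end

section
/- Let X be a 3-chromatic graph without isolated vertices that is reflexive for 3-colorings, and let v be a vertex of X of degree d. Then the graph B(X) − φ_X(v), obtained from B(X) by deleting all color classes that contain v, is bipartite, and d = 2^t, where t is the number of connected components of B(X) − φ_X(v). -/
open SimpleGraph

section Aux

open Classical in
/-- `phi k X v` is an independent set of the coloring complex. -/
theorem phi_indep' {V : Type*} (X : SimpleGraph V) (v : V)
    {C D : {S : Set V // IsColorClass 3 X S}}
    (hC : C ∈ phi 3 X v) (hD : D ∈ phi 3 X v) :
    ¬ (ColoringComplex 3 X).Adj C D := by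
  rintro ⟨hne, c, hc, ⟨i, hi⟩, ⟨j, hj⟩⟩
  obtain ⟨k, -, huniq⟩ := hc.1 v
  have hvi : v ∈ c i := by rw [hi]; exact hC
  have hvj : v ∈ c j := by rw [hj]; exact hD
  have : i = j := (huniq i hvi).trans (huniq j hvj).symm
  exact hne (Subtype.ext (by rw [← hi, ← hj, this]))

/-- `T` is a side of a proper 2-coloring of `B(X) - phi v`. -/
def Side {V : Type*} (X : SimpleGraph V) (v : V)
    (T : Set {S : Set V // IsColorClass 3 X S}) : Prop :=
  (∀ x ∈ T, x ∉ phi 3 X v) ∧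
  (∀ x ∈ T, ∀ y ∈ T, ¬ (ColoringComplex 3 X).Adj x y) ∧
  (∀ x, x ∉ phi 3 X v → x ∉ T → ∀ y, y ∉ phi 3 X v → y ∉ T →
    ¬ (ColoringComplex 3 X).Adj x y)

theorem side_of_coloring {V : Type*} (X : SimpleGraph V) (v : V)
    {c : Fin 3 → Set {S : Set V // IsColorClass 3 X S}}
    (hc : IsColoring 3 (ColoringComplex 3 X) c)
    {i j : Fin 3} (hij : i ≠ j) (hi : c i = phi 3 X v)
    {T : Set {S : Set V // IsColorClass 3 X S}} (hj : c j = T) :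
    Side X v T := by
  have htri : ∀ i j a b : Fin 3, i ≠ j → a ≠ i → a ≠ j → b ≠ i → b ≠ j → a = b := by decide
  refine ⟨?_, ?_, ?_⟩
  · intro x hx hx'
    have h1 : x ∈ c j := by rw [hj]; exact hx
    have h2 : x ∈ c i := by rw [hi]; exact hx'
    obtain ⟨k, -, huniq⟩ := hc.1 x
    exact hij ((huniq i h2).trans (huniq j h1).symm)
  · intro x hx y hy
    exact hc.2 j x (by rw [hj]; exact hx) y (by rw [hj]; exact hy)
  · intro x hx1 hx2 y hy1 hy2 hadj
    obtain ⟨m, hm, -⟩ := hc.1 x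
    obtain ⟨m', hm', -⟩ := hc.1 y
    have hmi : m ≠ i := by rintro rfl; rw [hi] at hm; exact hx1 hm
    have hmj : m ≠ j := by rintro rfl; rw [hj] at hm; exact hx2 hm
    have hmi' : m' ≠ i := by rintro rfl; rw [hi] at hm'; exact hy1 hm'
    have hmj' : m' ≠ j := by rintro rfl; rw [hj] at hm'; exact hy2 hm'
    have : m = m' := htri i j m m' hij hmi hmj hmi' hmj'
    exact hc.2 m x hm y (this ▸ hm') hadj

open Classical in
theorem isColoring_side {V : Type*} (X : SimpleGraph V) (v : V)
    {T : Set {S : Set V // IsColorClass 3 X S}} (hT : Side X v T) :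
    IsColoring 3 (ColoringComplex 3 X)
      (fun m => if m = 0 then phi 3 X v else if m = 1 then T else (phi 3 X v ∪ T)ᶜ) := by
  constructor
  · intro x
    by_cases h0 : x ∈ phi 3 X v
    · refine ⟨0, by simp [h0], ?_⟩
      intro m hm
      fin_cases m
      · rfl
      · simp only [if_neg, if_pos] at hm
        · exact absurd h0 (hT.1 x (by simpa using hm))
      · exfalso
        have : x ∉ phi 3 X v ∪ T := by simpa using hm
        exact this (Set.mem_union_left _ h0)
    · by_cases h1 : x ∈ T
      · refine ⟨1, by simp [h1], ?_⟩
        intro m hm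
        fin_cases m
        · exact absurd (by simpa using hm) h0
        · rfl
        · exfalso
          have : x ∉ phi 3 X v ∪ T := by simpa using hm
          exact this (Set.mem_union_right _ h1)
      · refine ⟨2, by simp [Set.mem_compl_iff, Set.mem_union, h0, h1], ?_⟩
        intro m hm
        fin_cases m
        · exact absurd (by simpa using hm) h0
        · exact absurd (by simpa using hm) h1
        · rfl
  · intro i
    fin_cases i
    · intro x hx y hy
      exact phi_indep' X v (by simpa using hx) (by simpa using hy)
    · intro x hx y hy
      exact hT.2.1 x (by simpa using hx) y (by simpa using hy)
    · intro x hx y hy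
      have hx' : x ∉ phi 3 X v ∪ T := by simpa using hx
      have hy' : y ∉ phi 3 X v ∪ T := by simpa using hy
      simp only [Set.mem_union, not_or] at hx' hy'
      exact hT.2.2 x hx'.1 hx'.2 y hy'.1 hy'.2

end Aux

set_option maxHeartbeats 2000000 in
/-- If `X` is a 3-chromatic graph without isolated vertices that is reflexive
for 3-colorings and `v` is a vertex of degree `d`, then `B(X) - φ_X(v)` is
bipartite and `d = 2 ^ t`, where `t` is its number of connected components. -/
theorem reflexive_degree_eq_two_pow {V : Type*} [Fintype V] (X : SimpleGraph V)
    (hchrom : X.chromaticNumber = 3)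
    (hnoiso : ∀ v : V, ∃ u, X.Adj v u)
    (href : IsReflexive 3 X) (v : V) (d : ℕ)
    (hd : Nat.card (X.neighborSet v) = d) :
    (∃ c : Fin 2 → Set ↥((phi 3 X v)ᶜ),
        IsColoring 2 ((ColoringComplex 3 X).induce ((phi 3 X v)ᶜ)) c) ∧
    d = 2 ^ Nat.card ((ColoringComplex 3 X).induce ((phi 3 X v)ᶜ)).ConnectedComponent := by
  classical
  obtain ⟨f, hf⟩ := href
  -- `v` lies in some color class
  have hcol : X.Colorable 3 := chromaticNumber_le_iff_colorable.mp (le_of_eq hchrom)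
  obtain ⟨g⟩ := hcol
  have hXcoloring : IsColoring 3 X (fun i => {x | g x = i}) := by
    constructor
    · intro x; exact ⟨g x, rfl, fun i hi => hi.symm⟩
    · intro i x hx y hy hadj; exact g.valid hadj (hx.trans hy.symm)
  have hvmem : ∃ C : {S : Set V // IsColorClass 3 X S}, C ∈ phi 3 X v :=
    ⟨⟨{x | g x = g v}, ⟨_, hXcoloring, g v, rfl⟩⟩, rfl⟩
  -- the base side `T₀`
  obtain ⟨u, huv⟩ := hnoiso v
  have hadj2 : (ColoringComplex 3 (ColoringComplex 3 X)).Adj (f v) (f u) :=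
    f.map_rel_iff.mpr huv
  obtain ⟨hne0, c0, hc0, ⟨i0, hi0⟩, ⟨j0, hj0⟩⟩ := hadj2
  rw [hf v] at hi0
  have hij0 : i0 ≠ j0 := by
    rintro rfl
    exact hne0 (Subtype.ext (by rw [hf v, ← hi0, hj0]))
  have hT₀ : Side X v (f u).1 := side_of_coloring X v hc0 hij0 hi0 hj0
  set T₀ : Set {S : Set V // IsColorClass 3 X S} := (f u).1 with hT₀def
  -- the flipping property of sides across edges of the punctured complex
  have hflip : ∀ T : Set {S : Set V // IsColorClass 3 X S}, Side X v T →
      ∀ x y : ↥((phi 3 X v)ᶜ),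
        ((ColoringComplex 3 X).induce ((phi 3 X v)ᶜ)).Adj x y →
        ((x : {S : Set V // IsColorClass 3 X S}) ∈ T ↔
          (y : {S : Set V // IsColorClass 3 X S}) ∉ T) := by
    intro T hT x y hxy
    have hb : (ColoringComplex 3 X).Adj x.1 y.1 := hxy
    constructor
    · intro hx hy'; exact hT.2.1 _ hx _ hy' hb
    · intro hy; by_contra hx; exact hT.2.2 _ x.2 hx _ y.2 hy hb
  constructor
  · -- bipartiteness: the two sides `T₀` and its complement
    refine ⟨fun m => if m = 0 then {x | x.1 ∈ T₀} else {x | x.1 ∉ T₀}, ?_, ?_⟩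
    · intro x
      by_cases hx : x.1 ∈ T₀
      · exact ⟨0, by simp [hx], fun m hm => by fin_cases m <;> simp_all⟩
      · exact ⟨1, by simp [hx], fun m hm => by fin_cases m <;> simp_all⟩
    · intro i
      fin_cases i
      · intro x hx y hy hadj
        exact ((hflip T₀ hT₀ x y hadj).mp (by simpa using hx)) (by simpa using hy)
      · intro x hx y hy hadj
        exact (by simpa using hx : x.1 ∉ T₀) ((hflip T₀ hT₀ x y hadj).mpr (by simpa using hy))
  · -- the counting
    -- Step 1: neighbors of `f v` correspond to sides
    have e2 : ((ColoringComplex 3 (ColoringComplex 3 X)).neighborSet (f v)) ≃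
        {T : Set {S : Set V // IsColorClass 3 X S} // Side X v T} := by
      refine ⟨fun D => ⟨D.1.1, ?_⟩, fun T => ⟨⟨T.1, ?_⟩, ?_⟩, ?_, ?_⟩
      · obtain ⟨hne, c, hc, ⟨i, hi⟩, ⟨j, hj⟩⟩ := D.2
        rw [hf v] at hi
        have hij : i ≠ j := by
          rintro rfl
          exact hne (Subtype.ext (by rw [hf v, ← hi, hj]))
        exact side_of_coloring X v hc hij hi hj
      · exact ⟨_, isColoring_side X v T.2, 1, by norm_num⟩
      · refine ⟨?_, _, isColoring_side X v T.2, ⟨0, by rw [hf v]; norm_num⟩, ⟨1, by norm_num⟩⟩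
        intro heq
        obtain ⟨C, hC⟩ := hvmem
        have : C ∈ T.1 := by
          have h1 : (f v).1 = T.1 := congrArg Subtype.val heq
          rw [← h1, hf v]; exact hC
        exact T.2.1 C this hC
      · intro D; exact Subtype.ext (Subtype.ext rfl)
      · intro T; exact Subtype.ext rfl
    -- Step 2: sides correspond to functions from components to Prop
    have e3 : {T : Set {S : Set V // IsColorClass 3 X S} // Side X v T} ≃
        (((ColoringComplex 3 X).induce ((phi 3 X v)ᶜ)).ConnectedComponent → Prop) := by
      have hstep : ∀ (T : Set {S : Set V // IsColorClass 3 X S}), Side X v T →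
          ∀ (x y : ↥((phi 3 X v)ᶜ))
          (p : (((ColoringComplex 3 X).induce ((phi 3 X v)ᶜ))).Walk x y), p.IsPath →
          ((x.1 ∈ T ↔ x.1 ∈ T₀) : Prop) = ((y.1 ∈ T ↔ y.1 ∈ T₀) : Prop) := by
        intro T hT x y p hp
        clear hp
        induction p with
        | nil => rfl
        | cons h q ih =>
          refine Eq.trans ?_ ih
          have h1 := hflip T hT _ _ h
          have h2 := hflip T₀ hT₀ _ _ h
          exact propext (by tauto)
      refine ⟨fun T => ConnectedComponent.lift
          (fun x => ((x.1 ∈ T.1 ↔ x.1 ∈ T₀) : Prop)) (hstep T.1 T.2),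
        fun s => ⟨{x | ∃ h : x ∈ (phi 3 X v)ᶜ,
          (s (((ColoringComplex 3 X).induce ((phi 3 X v)ᶜ)).connectedComponentMk ⟨x, h⟩)
            ↔ x ∈ T₀)}, ?_, ?_, ?_⟩, ?_, ?_⟩
      · rintro x ⟨h, -⟩ hx; exact h hx
      · rintro x ⟨hx, hsx⟩ y ⟨hy, hsy⟩ hb
        have hadj : ((ColoringComplex 3 X).induce ((phi 3 X v)ᶜ)).Adj ⟨x, hx⟩ ⟨y, hy⟩ := hb
        have hK := (ConnectedComponent.connectedComponentMk_eq_of_adj hadj : _)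
        rw [hK] at hsx
        have h2 := hflip T₀ hT₀ _ _ hadj
        simp only at h2
        tauto
      · intro x hx hx' y hy hy' hb
        have hxc : x ∈ (phi 3 X v)ᶜ := hx
        have hyc : y ∈ (phi 3 X v)ᶜ := hy
        have hadj : ((ColoringComplex 3 X).induce ((phi 3 X v)ᶜ)).Adj ⟨x, hxc⟩ ⟨y, hyc⟩ := hb
        have hK := (ConnectedComponent.connectedComponentMk_eq_of_adj hadj : _)
        have hsx : ¬ (s (((ColoringComplex 3 X).induce ((phi 3 X v)ᶜ)).connectedComponentMk
            ⟨x, hxc⟩) ↔ x ∈ T₀) := fun hiff => hx' ⟨hxc, hiff⟩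
        have hsy : ¬ (s (((ColoringComplex 3 X).induce ((phi 3 X v)ᶜ)).connectedComponentMk
            ⟨y, hyc⟩) ↔ y ∈ T₀) := fun hiff => hy' ⟨hyc, hiff⟩
        rw [hK] at hsx
        have h2 := hflip T₀ hT₀ _ _ hadj
        simp only at h2
        tauto
      · rintro ⟨T, hT⟩
        apply Subtype.ext
        ext x
        simp only [Set.mem_setOf_eq, ConnectedComponent.lift_mk]
        constructor
        · rintro ⟨h, hiff⟩
          by_cases hx0 : x ∈ T₀ <;> tauto
        · intro hx
          have h : x ∈ (phi 3 X v)ᶜ := fun hmem => hT.1 x hx hmem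
          exact ⟨h, by by_cases hx0 : x ∈ T₀ <;> tauto⟩
      · intro s
        funext K
        refine ConnectedComponent.ind (fun z => ?_) K
        beta_reduce
        rw [ConnectedComponent.lift_mk]
        have hmem : z.1 ∈ {x | ∃ h : x ∈ (phi 3 X v)ᶜ,
            (s (((ColoringComplex 3 X).induce ((phi 3 X v)ᶜ)).connectedComponentMk ⟨x, h⟩)
              ↔ x ∈ T₀)} ↔
            (s (((ColoringComplex 3 X).induce ((phi 3 X v)ᶜ)).connectedComponentMk z)
              ↔ z.1 ∈ T₀) :=
          ⟨fun ⟨_, hiff⟩ => hiff, fun hiff => ⟨z.2, hiff⟩⟩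
        apply propext
        constructor
        · intro hP
          by_cases hz0 : z.1 ∈ T₀ <;> tauto
        · intro hs
          by_cases hz0 : z.1 ∈ T₀ <;> tauto
    -- put the cardinalities together
    rw [← hd]
    have hcongr := Nat.card_congr ((f.mapNeighborSet v).trans (e2.trans e3))
    have hb : Nat.card Prop = 2 := by
      rw [Nat.card_eq_fintype_card]; exact Fintype.card_prop
    rw [hcongr, Nat.card_fun, hb]
end
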